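/- Let X be an infinite set of cardinality κ. If f and g are both rich functions on X (surjective, all fibers of cardinality κ, and having κ many p-snails for every p ≥ 0), then f and g are conjugate: there is a bijection γ of X with f = γ⁻¹ ∘ g ∘ γ. -/

import Mathlib

open Cardinal

/-- Cycle-type of a point in the functional graph of `f`. -/
def CycleType {X : Type*} (f : X → X) (x : X) (p : ℕ) : Prop :=
  (p = 0 ∧ Function.Injective fun n : ℕ => f^[n] x) ∨
  (1 ≤ p ∧ (∃ n : ℕ, f^[n] x = f^[n + p] x) ∧
    ∀ q : ℕ, 1 ≤ q → q < p → ¬∃ n : ℕ, f^[n] x = f^[n + q] x)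

/-- Connectedness in the functional graph of `f` (smallest equivalence relation
containing `{(x, f x)}`). -/
def Conn {X : Type*} (f : X → X) : X → X → Prop :=
  Relation.EqvGen fun a b => f a = b

/-- The set of `p`-snails of `f`: connected components of the functional graph of
`f` whose points have cycle-type `p`. -/
def Snails {X : Type*} (f : X → X) (p : ℕ) : Set (Set X) :=
  {C | ∃ x : X, C = {y | Conn f x y} ∧ CycleType f x p}

/-- A function is rich iff it is a generous surjection with `#X` many `p`-snails
for every `p`. -/
def Rich {X : Type*} (f : X → X) : Prop :=
  Function.Surjective f ∧ (∀ y : X, #(f ⁻¹' {y}) = #X) ∧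
    ∀ p : ℕ, #(Snails f p) = #X


/-!
Every point of a rich map lies in exactly one snail, and a `p`-snail is a spine (a bi-infinite
line if `p = 0`, a `p`-cycle otherwise) on which trees are grafted. Since every fiber has `#X`
points and at most one of them lies on the spine, each spine point has `#X` children off the
spine, and so does every tree vertex; hence every `p`-snail is isomorphic to one model built
from `ZMod p × List X`. As there are `#X` snails of each type, every rich map is conjugate to
one and the same disjoint union of models.
-/

open Function

section FunctionalGraph

variable {X : Type*} {f : X → X}

theorem conn_self_iterate (x : X) (n : ℕ) : Conn f x (f^[n] x) := by
  induction n with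
  | zero => exact .refl x
  | succ n ih => exact .trans _ _ _ ih (.rel _ _ (iterate_succ_apply' f n x).symm)

theorem conn_iff_exists_iterate_eq {x y : X} : Conn f x y ↔ ∃ m n, f^[m] x = f^[n] y := by
  constructor
  · have hequiv : Equivalence fun a b => ∃ m n, f^[m] a = f^[n] b :=
      { refl := fun a => ⟨0, 0, rfl⟩
        symm := fun ⟨m, n, h⟩ => ⟨n, m, h.symm⟩
        trans := fun {a b c} ⟨m, n, h⟩ ⟨m', n', h'⟩ => ⟨m' + m, n + n', by
          rw [iterate_add_apply, h, ← iterate_add_apply, Nat.add_comm, iterate_add_apply, h',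
            ← iterate_add_apply]⟩ }
    exact fun h => hequiv.eqvGen_iff.mp (h.mono fun a b hab => ⟨1, 0, hab⟩)
  · rintro ⟨m, n, h⟩
    exact .trans _ _ _ (conn_self_iterate x m) (h ▸ .symm _ _ (conn_self_iterate y n))

theorem exists_iterate_eq_add_of_iterate_eq {x y : X} {m n q : ℕ} (hxy : f^[m] x = f^[n] y)
    (hy : ∃ k, f^[k] y = f^[k + q] y) : ∃ k, f^[k] x = f^[k + q] x := by
  obtain ⟨k, hk⟩ := hy
  have hper : IsPeriodicPt f q (f^[k] y) := by
    rw [IsPeriodicPt, IsFixedPt, ← iterate_add_apply, Nat.add_comm, ← hk]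
  refine ⟨k + m, ?_⟩
  have hx : f^[k + m] x = f^[n] (f^[k] y) := by
    rw [iterate_add_apply, hxy, ← iterate_add_apply, ← iterate_add_apply, Nat.add_comm]
  rw [Nat.add_comm (k + m) q, iterate_add_apply f q, hx]
  exact (hper.apply_iterate n).symm

theorem Conn.exists_iterate_eq_add_iff {x y : X} (h : Conn f x y) {q : ℕ} :
    (∃ n, f^[n] x = f^[n + q] x) ↔ ∃ n, f^[n] y = f^[n + q] y := by
  obtain ⟨m, n, hmn⟩ := conn_iff_exists_iterate_eq.mp h
  exact ⟨exists_iterate_eq_add_of_iterate_eq hmn.symm, exists_iterate_eq_add_of_iterate_eq hmn⟩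

theorem injective_iterate_iff {x : X} :
    Injective (fun n => f^[n] x) ↔ ∀ q, 1 ≤ q → ¬∃ n, f^[n] x = f^[n + q] x := by
  constructor
  · rintro hinj q hq ⟨n, hn⟩
    have := hinj hn
    omega
  · intro h a b hab
    by_contra hne
    rcases Nat.lt_or_gt_of_ne hne with hlt | hlt
    · exact h (b - a) (by omega) ⟨a, by rwa [Nat.add_sub_cancel' hlt.le]⟩
    · exact h (a - b) (by omega) ⟨b, by rw [Nat.add_sub_cancel' hlt.le]; exact hab.symm⟩

theorem Conn.cycleType_iff {x y : X} (h : Conn f x y) {p : ℕ} :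
    CycleType f x p ↔ CycleType f y p := by
  simp only [CycleType, injective_iterate_iff, h.exists_iterate_eq_add_iff]

theorem exists_cycleType (f : X → X) (x : X) : ∃ p, CycleType f x p := by
  classical
  by_cases hinj : Injective fun n => f^[n] x
  · exact ⟨0, .inl ⟨rfl, hinj⟩⟩
  · have hex : ∃ q, 1 ≤ q ∧ ∃ n, f^[n] x = f^[n + q] x := by
      simpa [injective_iterate_iff] using hinj
    exact ⟨Nat.find hex, .inr ⟨(Nat.find_spec hex).1, (Nat.find_spec hex).2,
      fun q hq hlt hqn => Nat.find_min hex hlt ⟨hq, hqn⟩⟩⟩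

theorem CycleType.unique {x : X} {p q : ℕ} (hp : CycleType f x p) (hq : CycleType f x q) :
    p = q := by
  rcases hp with ⟨rfl, hpinj⟩ | ⟨hp, hpex, hpmin⟩ <;>
    rcases hq with ⟨rfl, hqinj⟩ | ⟨hq, hqex, hqmin⟩
  · rfl
  · exact absurd hqex (injective_iterate_iff.mp hpinj q hq)
  · exact absurd hpex (injective_iterate_iff.mp hqinj p hp)
  · by_contra hne
    rcases Nat.lt_or_gt_of_ne hne with hlt | hlt
    · exact hqmin p hp hlt hpex
    · exact hpmin q hq hlt hqex

theorem eq_setOf_conn_of_mem_snails {C : Set X} {p : ℕ} (hC : C ∈ Snails f p) {y : X}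
    (hy : y ∈ C) : C = {z | Conn f y z} ∧ CycleType f y p := by
  obtain ⟨x, rfl, hx⟩ := hC
  refine ⟨?_, (Conn.cycleType_iff hy).mp hx⟩
  ext z
  exact ⟨fun hz => .trans _ _ _ (.symm _ _ hy) hz, fun hz => .trans _ _ _ hy hz⟩

end FunctionalGraph

section Spine

variable {X : Type*} {f : X → X}

theorem Function.Semiconj.iterate_apply_add_one {R : Type*} [AddMonoidWithOne R] {s : R → X}
    (hs : Semiconj s (· + 1) f) (i : R) (k : ℕ) : f^[k] (s i) = s (i + k) := by
  simpa [add_right_iterate] using (hs.iterate_right k i).symm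

theorem ZMod.exists_natCast_eq_add_natCast {p : ℕ} (i : ZMod p) :
    ∃ a b : ℕ, (a : ZMod p) = i + b := by
  obtain ⟨z, rfl⟩ := ZMod.intCast_surjective i
  refine ⟨z.toNat, (-z).toNat, ?_⟩
  have h : (z.toNat : ℤ) = z + (-z).toNat := by omega
  exact_mod_cast congrArg ((↑) : ℤ → ZMod p) h

theorem exists_int_orbit (hf : Surjective f) (x : X) :
    ∃ t : ℤ → X, t 0 = x ∧ Semiconj t (· + 1) f := by
  set u := surjInv hf
  refine ⟨fun n => f^[n.toNat] (u^[(-n).toNat] x), rfl, fun n => ?_⟩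
  rcases le_or_gt 0 n with hn | hn
  · simp only
    rw [show (-(n + 1)).toNat = (-n).toNat by omega, show (n + 1).toNat = n.toNat + 1 by omega,
      iterate_succ_apply']
  · obtain ⟨k, hk⟩ : ∃ k, (-n).toNat = k + 1 := ⟨(-n).toNat - 1, by omega⟩
    simp only
    rw [show (n + 1).toNat = 0 by omega, show n.toNat = 0 by omega,
      show (-(n + 1)).toNat = k by omega, hk, iterate_succ_apply', iterate_zero_apply,
      iterate_zero_apply, surjInv_eq hf]

/-- For `p = 0` the spine is a bi-infinite line (`ZMod 0 = ℤ`). -/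
theorem exists_spine_of_injective_iterate (hf : Surjective f) {x : X}
    (hx : Injective fun n => f^[n] x) :
    ∃ s : ZMod 0 → X, Injective s ∧ Semiconj s (· + 1) f ∧ s 0 = x := by
  obtain ⟨t, ht0, ht⟩ := exists_int_orbit hf x
  have htnat : ∀ k : ℕ, t k = f^[k] x := fun k => by
    simpa [ht0] using (ht.iterate_apply_add_one 0 k).symm
  refine ⟨t, fun (a b : ℤ) hab => ?_, ht, ht0⟩
  have hnonneg : ∀ c : ℤ, 0 ≤ c → t c = f^[c.toNat] x := fun c hc => by
    rw [← htnat, Int.toNat_of_nonneg hc]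
  obtain ⟨k, hka, hkb⟩ : ∃ k : ℕ, 0 ≤ a + k ∧ 0 ≤ b + k :=
    ⟨(-a).toNat + (-b).toNat, by omega, by omega⟩
  have h := congrArg f^[k] hab
  rw [ht.iterate_apply_add_one, ht.iterate_apply_add_one, hnonneg _ hka, hnonneg _ hkb] at h
  have : (a + k).toNat = (b + k).toNat := hx h
  exact (by omega : a = b)

theorem exists_spine_of_minimalPeriod {z : X} {p : ℕ} (hp : 0 < p) (hz : minimalPeriod f z = p) :
    ∃ s : ZMod p → X, Injective s ∧ Semiconj s (· + 1) f ∧ s 0 = z := by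
  have : NeZero p := ⟨hp.ne'⟩
  have hnat : ∀ k : ℕ, f^[(k : ZMod p).val] z = f^[k] z := fun k => by
    rw [ZMod.val_natCast, ← hz, iterate_mod_minimalPeriod_eq]
  refine ⟨fun i => f^[i.val] z, fun i j hij => ?_, fun i => ?_, by simp⟩
  · refine ZMod.val_injective p (iterate_injOn_Iio_minimalPeriod ?_ ?_ hij) <;>
      simp [hz, ZMod.val_lt]
  · simp only
    rw [← ZMod.natCast_zmod_val i, ← Nat.cast_one, ← Nat.cast_add, hnat,
      ZMod.natCast_zmod_val, iterate_succ_apply']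

theorem CycleType.exists_iterate_minimalPeriod_eq {x : X} {p : ℕ} (hx : CycleType f x p)
    (hp : 1 ≤ p) : ∃ n, minimalPeriod f (f^[n] x) = p := by
  rcases hx with ⟨rfl, -⟩ | ⟨-, ⟨n, hn⟩, hmin⟩
  · omega
  have hper : IsPeriodicPt f p (f^[n] x) := by
    rw [IsPeriodicPt, IsFixedPt, ← iterate_add_apply, Nat.add_comm, ← hn]
  refine ⟨n, le_antisymm (hper.minimalPeriod_le (by omega)) (not_lt.mp fun hlt => ?_)⟩
  refine hmin _ (hper.minimalPeriod_pos (by omega)) hlt ⟨n, ?_⟩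
  rw [Nat.add_comm, iterate_add_apply, isPeriodicPt_minimalPeriod]

theorem CycleType.exists_spine (hf : Surjective f) {x : X} {p : ℕ} (hx : CycleType f x p) :
    ∃ s : ZMod p → X, Injective s ∧ Semiconj s (· + 1) f ∧ ∃ n, f^[n] x = s 0 := by
  rcases Nat.eq_zero_or_pos p with rfl | hp
  · have hinj : Injective fun n => f^[n] x := hx.elim And.right fun h => absurd h.1 (by omega)
    obtain ⟨s, hsinj, hs, hs0⟩ := exists_spine_of_injective_iterate hf hinj
    exact ⟨s, hsinj, hs, 0, hs0.symm⟩
  · obtain ⟨n, hn⟩ := hx.exists_iterate_minimalPeriod_eq hp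
    obtain ⟨s, hinj, hs, hs0⟩ := exists_spine_of_minimalPeriod hp hn
    exact ⟨s, hinj, hs, n, hs0.symm⟩

theorem setOf_conn_eq_of_spine {p : ℕ} {s : ZMod p → X} (hs : Semiconj s (· + 1) f) {x : X}
    {n : ℕ} (hx : f^[n] x = s 0) : {y | Conn f x y} = {y | ∃ d, f^[d] y ∈ Set.range s} := by
  ext y
  simp only [Set.mem_ofPred_eq, conn_iff_exists_iterate_eq]
  constructor
  · rintro ⟨a, b, hab⟩
    refine ⟨n + b, a, ?_⟩
    rw [iterate_add_apply, ← hab, ← iterate_add_apply, Nat.add_comm, iterate_add_apply, hx,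
      hs.iterate_apply_add_one, zero_add]
  · rintro ⟨d, i, hi⟩
    obtain ⟨a, b, hab⟩ := ZMod.exists_natCast_eq_add_natCast i
    refine ⟨a + n, b + d, ?_⟩
    rw [iterate_add_apply, hx, hs.iterate_apply_add_one, zero_add, hab, iterate_add_apply, ← hi,
      hs.iterate_apply_add_one]

end Spine

/-- The model `p`-snail: `(i, [])` is the `i`-th point of the spine and `(i, l)` the vertex
of the tree hanging at it reached by the path `l`; one step moves towards the spine. -/
def snailStep {K : Type*} (p : ℕ) : ZMod p × List K → ZMod p × List K
  | (i, []) => (i + 1, [])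
  | (i, _ :: l) => (i, l)

def richModelStep (K : Type*) :
    (Σ p : ℕ, K × (ZMod p × List K)) → Σ p : ℕ, K × (ZMod p × List K) :=
  fun y => ⟨y.1, y.2.1, snailStep y.1 y.2.2⟩

section Graft

variable {X : Type*} {f : X → X} {p : ℕ} (s : ZMod p → X)
  (c : ∀ y, X ≃ (f ⁻¹' {y} \ Set.range s : Set X))

def graft (m : ZMod p × List X) : X :=
  m.2.foldr (fun a y => c y a) (s m.1)

theorem apply_coe_fiber_sdiff_equiv (y a : X) : f (c y a) = y := (c y a).2.1

theorem graft_cons (i : ZMod p) (a : X) (l : List X) :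
    graft s c (i, a :: l) = c (graft s c (i, l)) a := rfl

variable {s c}

theorem semiconj_graft (hs : Semiconj s (· + 1) f) : Semiconj (graft s c) (snailStep p) f := by
  rintro ⟨i, _ | ⟨a, l⟩⟩
  · exact hs i
  · exact (apply_coe_fiber_sdiff_equiv s c _ a).symm

theorem injective_graft (hs : Injective s) : Injective (graft s c) := by
  suffices ∀ (l l' : List X) (i i' : ZMod p),
      graft s c (i, l) = graft s c (i', l') → i = i' ∧ l = l' by
    rintro ⟨i, l⟩ ⟨i', l'⟩ h
    obtain ⟨rfl, rfl⟩ := this l l' i i' h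
    rfl
  intro l
  induction l with
  | nil =>
    rintro (_ | ⟨a', l'⟩) i i' h
    · exact ⟨hs h, rfl⟩
    · exact absurd ⟨i, h⟩ (c _ a').2.2
  | cons a l ih =>
    rintro (_ | ⟨a', l'⟩) i i' h
    · exact absurd ⟨i', h.symm⟩ (c _ a).2.2
    · have hparent : graft s c (i, l) = graft s c (i', l') := by
        simpa only [graft_cons, apply_coe_fiber_sdiff_equiv] using congrArg f h
      obtain ⟨rfl, rfl⟩ := ih l' i i' hparent
      rw [graft_cons, graft_cons, hparent] at h
      exact ⟨rfl, by rw [(c _).injective (Subtype.ext h)]⟩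

theorem iterate_length_graft (i : ZMod p) (l : List X) :
    f^[l.length] (graft s c (i, l)) = s i := by
  induction l with
  | nil => rfl
  | cons a l ih =>
    rw [List.length_cons, iterate_succ_apply, graft_cons, apply_coe_fiber_sdiff_equiv s c, ih]

theorem range_graft : Set.range (graft s c) = {y | ∃ d, f^[d] y ∈ Set.range s} := by
  refine subset_antisymm ?_ ?_
  · rintro _ ⟨⟨i, l⟩, rfl⟩
    exact ⟨l.length, i, (iterate_length_graft i l).symm⟩
  · rintro y ⟨d, hd⟩
    induction d generalizing y with
    | zero => obtain ⟨i, rfl⟩ := hd; exact ⟨(i, []), rfl⟩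
    | succ d ih =>
      by_cases hy : y ∈ Set.range s
      · obtain ⟨i, rfl⟩ := hy; exact ⟨(i, []), rfl⟩
      obtain ⟨⟨i, l⟩, hl⟩ := ih (by rwa [← iterate_succ_apply] : f^[d] (f y) ∈ _)
      refine ⟨(i, (c _).symm ⟨y, hl.symm, hy⟩ :: l), ?_⟩
      exact congrArg Subtype.val ((c _).apply_symm_apply _)

end Graft

theorem Cardinal.mk_sdiff_eq_of_subsingleton_inter {X : Type*} {A B : Set X} (hA : ℵ₀ ≤ #A)
    (hAB : (A ∩ B).Subsingleton) : #(A \ B : Set X) = #A := by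
  refine le_antisymm (mk_le_mk_of_subset Set.sdiff_subset) ?_
  have hle : #A ≤ #(A \ B : Set X) + 1 :=
    calc #A ≤ #(A \ (A ∩ B) : Set X) + #(A ∩ B : Set X) := le_mk_sdiff_add_mk _ _
      _ ≤ #(A \ B : Set X) + 1 := by
        rw [Set.sdiff_self_inter]
        gcongr
        exact hAB.cardinalMk_le_one
  have hinf : ℵ₀ ≤ #(A \ B : Set X) := by
    by_contra! h
    exact hA.not_gt (hle.trans_lt (add_lt_aleph0 h one_lt_aleph0))
  rwa [add_one_eq hinf] at hle

section Rich

variable {X : Type*} [Infinite X] {f : X → X}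

theorem Rich.mk_fiber_sdiff_range (hf : Rich f) {p : ℕ} {s : ZMod p → X} (hinj : Injective s)
    (hs : Semiconj s (· + 1) f) (y : X) : #(f ⁻¹' {y} \ Set.range s : Set X) = #X := by
  rw [← hf.2.1 y]
  refine mk_sdiff_eq_of_subsingleton_inter (by rw [hf.2.1 y]; exact aleph0_le_mk X) ?_
  rintro _ ⟨h₁, i₁, rfl⟩ _ ⟨h₂, i₂, rfl⟩
  have : s (i₁ + 1) = s (i₂ + 1) := by
    rw [hs i₁, hs i₂]
    exact h₁.trans h₂.symm
  rw [add_right_cancel (hinj this)]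

theorem Rich.exists_snail_param (hf : Rich f) {x : X} {p : ℕ} (hx : CycleType f x p) :
    ∃ Φ : ZMod p × List X → X,
      Injective Φ ∧ Semiconj Φ (snailStep p) f ∧ Set.range Φ = {y | Conn f x y} := by
  obtain ⟨s, hinj, hs, n, hn⟩ := hx.exists_spine hf.1
  have hc (y : X) : Nonempty (X ≃ (f ⁻¹' {y} \ Set.range s : Set X)) :=
    Cardinal.eq.mp (hf.mk_fiber_sdiff_range hinj hs y).symm
  exact ⟨graft s fun y => (hc y).some, injective_graft hinj, semiconj_graft hs,
    range_graft.trans (setOf_conn_eq_of_spine hs hn).symm⟩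

theorem Rich.exists_equiv_semiconj (hf : Rich f) :
    ∃ e : (Σ p : ℕ, X × (ZMod p × List X)) ≃ X, Semiconj e (richModelStep X) f := by
  let E (p : ℕ) : X ≃ Snails f p := (Cardinal.eq.mp (hf.2.2 p).symm).some
  have hΦ (p : ℕ) (C : Snails f p) : ∃ Φ : ZMod p × List X → X,
      Injective Φ ∧ Semiconj Φ (snailStep p) f ∧ Set.range Φ = C := by
    obtain ⟨C, x, rfl, hx⟩ := C
    exact hf.exists_snail_param hx
  choose Φ hΦinj hΦsemi hΦrange using hΦ
  let Ψ : (Σ p : ℕ, X × (ZMod p × List X)) → X := fun y => Φ y.1 (E y.1 y.2.1) y.2.2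
  have hmem (p : ℕ) (k : X) (m : ZMod p × List X) : Ψ ⟨p, k, m⟩ ∈ (E p k : Set X) :=
    hΦrange p _ ▸ Set.mem_range_self m
  refine ⟨.ofBijective Ψ ⟨?_, fun x => ?_⟩, fun y => hΦsemi y.1 _ y.2.2⟩
  · rintro ⟨p, k, m⟩ ⟨p', k', m'⟩ h
    obtain ⟨hC, hp⟩ := eq_setOf_conn_of_mem_snails (E p k).2 (hmem p k m)
    obtain ⟨hC', hp'⟩ := eq_setOf_conn_of_mem_snails (E p' k').2 (h ▸ hmem p' k' m')
    obtain rfl := hp.unique hp'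
    obtain rfl : k = k' := (E p).injective (Subtype.ext (hC.trans hC'.symm))
    obtain rfl := hΦinj p _ h
    rfl
  · obtain ⟨p, hp⟩ := exists_cycleType f x
    let C : Snails f p := ⟨_, x, rfl, hp⟩
    obtain ⟨m, hm⟩ : x ∈ Set.range (Φ p C) := by
      rw [hΦrange]
      exact Relation.EqvGen.refl x
    exact ⟨⟨p, (E p).symm C, m⟩, by simp [Ψ, hm]⟩

end Rich

theorem stmt_12 {X : Type*} [Infinite X] (f g : X → X)
    (hf : Rich f) (hg : Rich g) :
    ∃ γ : Equiv.Perm X, f = ⇑γ.symm ∘ g ∘ ⇑γ := by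
  obtain ⟨ef, hef⟩ := hf.exists_equiv_semiconj
  obtain ⟨eg, heg⟩ := hg.exists_equiv_semiconj
  have hconj : Semiconj (ef ∘ eg.symm) g f :=
    (heg.inverse_left eg.left_inv eg.right_inv).trans hef
  refine ⟨ef.symm.trans eg, funext fun x => ?_⟩
  simpa using (hconj (eg (ef.symm x))).symm
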